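/- In the exact-data case δ = 0 (i.e. y^δ = y), the sequence (E⁰(k))_{k≥0} is non-increasing, and for each k ≥ 0 there holds ‖F(x_k⁰) − y‖² ≤ (α−1)E⁰(0)/(ω(k+α−2)²) and ‖w_k⁰ − x_*‖² ≤ E⁰(0)/(α−1). -/

import Mathlib

/-!
On `B_{6ρ}(x₀)` the residual `Φ⁰` is convex with `L`-Lipschitz gradient `F'(x)*(F(x) - y)`, the
iterates `x_k` stay in `B_{2ρ}(x₀)` and the extrapolated points `z_k` in `B_{6ρ}(x₀)`. For a
projected gradient step with `ωL ≤ 1`, the descent lemma, the gradient inequality of convexity and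
the variational inequality of the projection give, for every `v ∈ B_{2ρ}(x₀)`,
`2ω(Φ⁰(x_{k+1}) - Φ⁰(v)) ≤ ‖z_k - v‖² - ‖x_{k+1} - v‖²`.
Taking `v = (1 - θ)x_k + θx_*` with `θ = (α - 1)/(k + α - 1)` turns both `z_k - v` and
`x_{k+1} - v` into `θ`-multiples of `w - x_*`, while convexity and `Φ⁰(x_*) = 0` give
`Φ⁰(v) ≤ (1 - θ)Φ⁰(x_k)`; since `k(k + α - 1) ≤ (k + α - 2)²` for `α ≥ 3`, this is
`E⁰(k+1) ≤ E⁰(k)`. Both bounds then follow from `E⁰(k) ≤ E⁰(0)`.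
-/

open Metric
open scoped RealInnerProductSpace

section Gradient

variable {X : Type*} [NormedAddCommGroup X] [InnerProductSpace ℝ X] [CompleteSpace X]
  {f : X → ℝ} {g : X → X} {s : Set X}

theorem HasFDerivAt.hasGradientAt_half_sq_norm_sub {Y : Type*} [NormedAddCommGroup Y]
    [InnerProductSpace ℝ Y] [CompleteSpace Y] {F : X → Y} {F' : X →L[ℝ] Y} {u : X}
    (hF : HasFDerivAt F F' u) (y : Y) :
    HasGradientAt (fun v => 1 / 2 * ‖F v - y‖ ^ 2)
      (ContinuousLinearMap.adjoint F' (F u - y)) u := by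
  convert hasFDerivAt_iff_hasGradientAt.mp (((hF.sub_const y).norm_sq).const_mul (1 / 2)) using 1
  rw [LinearIsometryEquiv.eq_symm_apply]
  ext v
  simp [ContinuousLinearMap.adjoint_inner_left]

theorem HasGradientAt.hasDerivAt_comp_lineMap {g' a b : X} {t : ℝ}
    (h : HasGradientAt f g' (AffineMap.lineMap a b t)) :
    HasDerivAt (fun r => f (AffineMap.lineMap a b r)) ⟪g', b - a⟫ t := by
  have := h.hasFDerivAt.comp_hasDerivAt t AffineMap.hasDerivAt_lineMap
  rw [InnerProductSpace.toDual_apply_apply] at this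
  exact this

theorem ConvexOn.inner_le_sub_of_hasGradientAt (hf : ConvexOn ℝ s f) {g' z v : X}
    (hz : z ∈ s) (hv : v ∈ s) (h : HasGradientAt f g' z) : ⟪g', v - z⟫ ≤ f v - f z := by
  have := (hf.comp_affineMap (AffineMap.lineMap z v)).le_slope_of_hasDerivAt (x := 0) (y := 1)
    (by simpa) (by simpa) one_pos (HasGradientAt.hasDerivAt_comp_lineMap (by simpa))
  simpa [slope] using this

theorem le_add_inner_add_of_lipschitz_gradient (hs : Convex ℝ s)
    (hg : ∀ u ∈ s, HasGradientAt f (g u) u) {L : ℝ}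
    (hL : ∀ u ∈ s, ∀ v ∈ s, ‖g u - g v‖ ≤ L * ‖u - v‖) {z p : X} (hz : z ∈ s) (hp : p ∈ s) :
    f p ≤ f z + ⟪g z, p - z⟫ + L / 2 * ‖p - z‖ ^ 2 := by
  set d := p - z
  set γ : ℝ →ᵃ[ℝ] X := AffineMap.lineMap z p
  have hγ : ∀ t ∈ Set.Icc (0 : ℝ) 1, γ t ∈ s := fun t ht => hs.lineMap_mem hz hp ht
  let h : ℝ → ℝ := fun t => f (γ t) - t * ⟪g z, d⟫ - L / 2 * t ^ 2 * ‖d‖ ^ 2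
  have hderiv : ∀ t ∈ Set.Icc (0 : ℝ) 1,
      HasDerivAt h (⟪g (γ t) - g z, d⟫ - L * t * ‖d‖ ^ 2) t := by
    intro t ht
    refine ((((hg _ (hγ t ht)).hasDerivAt_comp_lineMap).sub
      ((hasDerivAt_id t).mul_const ⟪g z, d⟫)).sub
      (((hasDerivAt_pow 2 t).const_mul (L / 2)).mul_const (‖d‖ ^ 2))).congr_deriv ?_
    simp only [inner_sub_left, Nat.cast_ofNat, one_mul, d]
    ring
  have hnonpos : ∀ t ∈ Set.Icc (0 : ℝ) 1, ⟪g (γ t) - g z, d⟫ - L * t * ‖d‖ ^ 2 ≤ 0 := by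
    intro t ht
    have hγz : ‖γ t - z‖ = t * ‖d‖ := by
      rw [← vsub_eq_sub, AffineMap.lineMap_vsub_left, norm_smul, Real.norm_of_nonneg ht.1]; rfl
    have := calc ⟪g (γ t) - g z, d⟫ ≤ ‖g (γ t) - g z‖ * ‖d‖ := real_inner_le_norm _ _
      _ ≤ L * (t * ‖d‖) * ‖d‖ := by
        rw [← hγz]; exact mul_le_mul_of_nonneg_right (hL _ (hγ t ht) z hz) (norm_nonneg d)
    linarith
  have hanti : AntitoneOn h (Set.Icc 0 1) :=
    antitoneOn_of_hasDerivWithinAt_nonpos (convex_Icc 0 1)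
      (fun t ht => (hderiv t ht).continuousAt.continuousWithinAt)
      (fun t ht => (hderiv t (interior_subset ht)).hasDerivWithinAt)
      (fun t ht => hnonpos t (interior_subset ht))
  have h10 := hanti (Set.left_mem_Icc.2 zero_le_one) (Set.right_mem_Icc.2 zero_le_one) zero_le_one
  simp only [h, γ, AffineMap.lineMap_apply_zero, AffineMap.lineMap_apply_one] at h10
  linarith

end Gradient

theorem Convex.real_inner_sub_le_zero_of_forall_norm_sub_le {X : Type*} [NormedAddCommGroup X]
    [InnerProductSpace ℝ X] {K : Set X} (hK : Convex ℝ K) {u p : X} (hp : p ∈ K)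
    (hmin : ∀ v ∈ K, ‖u - p‖ ≤ ‖u - v‖) {v : X} (hv : v ∈ K) : ⟪u - p, v - p⟫ ≤ 0 := by
  have : Nonempty K := ⟨⟨p, hp⟩⟩
  refine (norm_eq_iInf_iff_real_inner_le_zero hK hp).mp (le_antisymm ?_ ?_) v hv
  · exact le_ciInf fun w => hmin w w.2
  · exact ciInf_le (f := fun w : K => ‖u - w‖)
      ⟨0, Set.forall_mem_range.2 fun _ => norm_nonneg _⟩ ⟨p, hp⟩

theorem abs_sub_one_div_add_sub_one_le_one {k α : ℝ} (hk : 0 ≤ k) (hα : 2 ≤ α) :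
    |(k - 1) / (k + α - 1)| ≤ 1 := by
  have hT : 0 < k + α - 1 := by linarith
  rw [abs_div, abs_of_pos hT, div_le_one hT, abs_le]
  constructor <;> linarith

theorem add_smul_sub_mem_closedBall {E : Type*} [SeminormedAddCommGroup E] [NormedSpace ℝ E]
    {c a b : E} {r θ : ℝ} (ha : a ∈ closedBall c r) (hb : b ∈ closedBall c r) (hθ : |θ| ≤ 1) :
    b + θ • (b - a) ∈ closedBall c (3 * r) := by
  rw [mem_closedBall_iff_norm] at *
  have hr : 0 ≤ r := (norm_nonneg _).trans ha
  calc ‖b + θ • (b - a) - c‖ = ‖(b - c) + θ • ((b - c) - (a - c))‖ := by congr 1; module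
    _ ≤ ‖b - c‖ + |θ| * (‖b - c‖ + ‖a - c‖) := by
      refine (norm_add_le _ _).trans ?_
      rw [norm_smul, Real.norm_eq_abs]
      gcongr
      exact norm_sub_le _ _
    _ ≤ r + 1 * (r + r) := by gcongr
    _ = 3 * r := by ring

section ProjectedGradient

variable {X : Type*} [NormedAddCommGroup X] [InnerProductSpace ℝ X] [CompleteSpace X]
  {f : X → ℝ} {g : X → X} {s K : Set X}

theorem ConvexOn.two_mul_sub_le_of_projected_gradient_step (hf : ConvexOn ℝ s f)
    (hg : ∀ u ∈ s, HasGradientAt f (g u) u) {L : ℝ}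
    (hL : ∀ u ∈ s, ∀ v ∈ s, ‖g u - g v‖ ≤ L * ‖u - v‖) (hK : Convex ℝ K) (hKs : K ⊆ s)
    {ω : ℝ} (hω : 0 ≤ ω) (hωL : ω * L ≤ 1) {z x v : X} (hz : z ∈ s) (hx : x ∈ K)
    (hxmin : ∀ u ∈ K, ‖z - ω • g z - x‖ ≤ ‖z - ω • g z - u‖) (hv : v ∈ K) :
    2 * ω * (f x - f v) ≤ ‖z - v‖ ^ 2 - ‖x - v‖ ^ 2 := by
  have hlower := hf.inner_le_sub_of_hasGradientAt hz (hKs hv) (hg z hz)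
  have hupper := le_add_inner_add_of_lipschitz_gradient hf.1 hg hL hz (hKs hx)
  have hproj := hK.real_inner_sub_le_zero_of_forall_norm_sub_le hx hxmin hv
  have hpyth : ‖z - v‖ ^ 2 = ‖z - x‖ ^ 2 + 2 * ⟪z - x, x - v⟫ + ‖x - v‖ ^ 2 := by
    rw [← norm_add_sq_real, sub_add_sub_cancel]
  have hgrad : ⟪g z, x - z⟫ - ⟪g z, v - z⟫ = ⟪g z, x - v⟫ := by
    rw [← inner_sub_right, sub_sub_sub_cancel_right]
  have hproj' : ω * ⟪g z, x - v⟫ ≤ ⟪z - x, x - v⟫ := by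
    rw [show z - ω • g z - x = (z - x) - ω • g z by abel, ← neg_sub x v, inner_neg_right,
      inner_sub_left, real_inner_smul_left] at hproj
    linarith
  rw [norm_sub_rev] at hupper
  have hωL' : ω * L * ‖z - x‖ ^ 2 ≤ ‖z - x‖ ^ 2 :=
    mul_le_of_le_one_left (sq_nonneg _) hωL
  nlinarith [mul_le_mul_of_nonneg_left hupper hω, mul_le_mul_of_nonneg_left hlower hω]

end ProjectedGradient

section Nesterov

variable {X : Type*} [NormedAddCommGroup X] [InnerProductSpace ℝ X]

noncomputable def nesterovEnergy (f : X → ℝ) (α ω : ℝ) (xstar : X) (k : ℕ) (xprev xk : X) : ℝ :=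
  2 * ω / (α - 1) * ((k : ℝ) + α - 2) ^ 2 * f xk
    + (α - 1) * ‖xk + (((k : ℝ) - 1) / (α - 1)) • (xk - xprev) - xstar‖ ^ 2

theorem sq_mul_one_sub_div_le_sq {k α : ℝ} (hk : 0 ≤ k) (hα : 3 ≤ α) :
    (k + α - 1) ^ 2 * (1 - (α - 1) / (k + α - 1)) ≤ (k + α - 2) ^ 2 := by
  have hT : k + α - 1 ≠ 0 := by linarith
  have : (k + α - 1) ^ 2 * (1 - (α - 1) / (k + α - 1)) = k * (k + α - 1) := by
    field_simp; ring
  nlinarith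

theorem nesterovEnergy_succ_le {f : X → ℝ} {K : Set X} (hf : ConvexOn ℝ K f) {α ω : ℝ}
    (hα : 3 ≤ α) (hω : 0 ≤ ω) {xstar xprev xk xnext : X} (hxk : xk ∈ K) (hxstar : xstar ∈ K)
    (hfstar : f xstar = 0) (hfk : 0 ≤ f xk) (k : ℕ)
    (hstep : ∀ v ∈ K, 2 * ω * (f xnext - f v) ≤
      ‖xk + (((k : ℝ) - 1) / ((k : ℝ) + α - 1)) • (xk - xprev) - v‖ ^ 2 - ‖xnext - v‖ ^ 2) :
    nesterovEnergy f α ω xstar (k + 1) xk xnext ≤ nesterovEnergy f α ω xstar k xprev xk := by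
  have hk : (0 : ℝ) ≤ k := k.cast_nonneg
  set T : ℝ := k + α - 1 with hT_def
  have hT : 0 < T := by linarith
  have hα1 : α - 1 ≠ 0 := by linarith
  have hT0 : (k : ℝ) + α - 1 ≠ 0 := hT.ne'
  set θ : ℝ := (α - 1) / T with hθ_def
  have hθ0 : 0 ≤ θ := div_nonneg (by linarith) hT.le
  have hθ1 : θ ≤ 1 := (div_le_one hT).2 (by linarith)
  set v := (1 - θ) • xk + θ • xstar
  have hfv : f v ≤ (1 - θ) * f xk := by
    simpa [hfstar] using hf.2 hxk hxstar (sub_nonneg.2 hθ1) hθ0 (by ring)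
  set wk := xk + (((k : ℝ) - 1) / (α - 1)) • (xk - xprev)
  set wnext := xnext + ((k : ℝ) / (α - 1)) • (xnext - xk)
  have hzv : xk + (((k : ℝ) - 1) / T) • (xk - xprev) - v = θ • (wk - xstar) := by
    simp only [v, wk, hθ_def, hT_def]
    match_scalars <;> field_simp
    ring
  have hxv : xnext - v = θ • (wnext - xstar) := by
    simp only [v, wnext, hθ_def, hT_def]
    match_scalars <;> field_simp <;> ring
  have hdesc := hstep v (hf.1 hxk hxstar (sub_nonneg.2 hθ1) hθ0 (by ring))
  rw [hzv, hxv, norm_smul, norm_smul, mul_pow, mul_pow, Real.norm_of_nonneg hθ0] at hdesc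
  have hc : 0 ≤ 2 * ω / (α - 1) := div_nonneg (by linarith) (by linarith)
  have hdist : 2 * ω / (α - 1) * T ^ 2 * (f xnext - f v)
      ≤ (α - 1) * (‖wk - xstar‖ ^ 2 - ‖wnext - xstar‖ ^ 2) := by
    have hθT : T ^ 2 / (α - 1) * θ ^ 2 = α - 1 := by rw [hθ_def]; field_simp
    calc _ = T ^ 2 / (α - 1) * (2 * ω * (f xnext - f v)) := by ring
      _ ≤ T ^ 2 / (α - 1) * (θ ^ 2 * ‖wk - xstar‖ ^ 2 - θ ^ 2 * ‖wnext - xstar‖ ^ 2) := by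
        gcongr
        exact div_nonneg (sq_nonneg T) (by linarith)
      _ = T ^ 2 / (α - 1) * θ ^ 2 * (‖wk - xstar‖ ^ 2 - ‖wnext - xstar‖ ^ 2) := by ring
      _ = _ := by rw [hθT]
  have hfv' : 2 * ω / (α - 1) * T ^ 2 * f v ≤ 2 * ω / (α - 1) * ((k : ℝ) + α - 2) ^ 2 * f xk :=
    calc _ ≤ 2 * ω / (α - 1) * T ^ 2 * ((1 - θ) * f xk) := by gcongr
      _ = 2 * ω / (α - 1) * (T ^ 2 * (1 - θ)) * f xk := by ring
      _ ≤ _ := by gcongr; exact sq_mul_one_sub_div_le_sq hk hα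
  unfold nesterovEnergy
  push_cast
  rw [show (k : ℝ) + 1 + α - 2 = T by ring, add_sub_cancel_right]
  linarith

theorem two_mul_le_of_nesterovEnergy_le {f : X → ℝ} {α ω B : ℝ} {xstar xprev xk : X} {k : ℕ}
    (hα : 1 < α) (hω : 0 < ω) (hk : 0 < (k : ℝ) + α - 2)
    (h : nesterovEnergy f α ω xstar k xprev xk ≤ B) :
    2 * f xk ≤ (α - 1) * B / (ω * ((k : ℝ) + α - 2) ^ 2) := by
  have hα1 : 0 < α - 1 := by linarith
  rw [le_div_iff₀ (by positivity)]
  unfold nesterovEnergy at h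
  have hpart : 2 * ω / (α - 1) * ((k : ℝ) + α - 2) ^ 2 * f xk ≤ B := by
    linarith [mul_nonneg hα1.le (sq_nonneg ‖xk + (((k : ℝ) - 1) / (α - 1)) • (xk - xprev) - xstar‖)]
  calc 2 * f xk * (ω * ((k : ℝ) + α - 2) ^ 2)
      = (α - 1) * (2 * ω / (α - 1) * ((k : ℝ) + α - 2) ^ 2 * f xk) := by field_simp
    _ ≤ (α - 1) * B := by gcongr

theorem sq_norm_sub_le_of_nesterovEnergy_le {f : X → ℝ} {α ω B : ℝ} {xstar xprev xk : X} {k : ℕ}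
    (hα : 1 < α) (hω : 0 ≤ ω) (hfk : 0 ≤ f xk) (h : nesterovEnergy f α ω xstar k xprev xk ≤ B) :
    ‖xk + (((k : ℝ) - 1) / (α - 1)) • (xk - xprev) - xstar‖ ^ 2 ≤ B / (α - 1) := by
  have hα1 : 0 < α - 1 := by linarith
  rw [le_div_iff₀ hα1]
  unfold nesterovEnergy at h
  have : 0 ≤ 2 * ω / (α - 1) * ((k : ℝ) + α - 2) ^ 2 * f xk := by positivity
  linarith

end Nesterov

theorem nesterov_exact_energy_decay_general
    {X Y : Type*} [NormedAddCommGroup X] [InnerProductSpace ℝ X] [CompleteSpace X]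
    [NormedAddCommGroup Y] [InnerProductSpace ℝ Y] [CompleteSpace Y]
    (x₀ : X) (ρ : ℝ)
    (F : X → Y) (F' : X → X →L[ℝ] Y)
    (hF : ∀ u ∈ closedBall x₀ (6 * ρ), HasFDerivAt F (F' u) u)
    (y : Y) (xstar : X) (hxstar : xstar ∈ closedBall x₀ ρ) (hFxstar : F xstar = y)
    -- the exact residual functional
    (Φ0 : X → ℝ)
    (hΦ0 : ∀ u, Φ0 u = (1 / 2) * ‖F u - y‖ ^ 2)
    -- convexity and Lipschitz continuity of the gradient on `B_{6ρ}(x₀)`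
    (hconv : ConvexOn ℝ (closedBall x₀ (6 * ρ)) Φ0)
    (L : ℝ)
    (hLip : ∀ u ∈ closedBall x₀ (6 * ρ), ∀ v ∈ closedBall x₀ (6 * ρ),
      ‖(ContinuousLinearMap.adjoint (F' u)) (F u - y) -
        (ContinuousLinearMap.adjoint (F' v)) (F v - y)‖ ≤ L * ‖u - v‖)
    (α ω : ℝ) (hα : 3 < α) (hω : 0 < ω) (hωL : ω < 1 / L)
    -- `P` is the metric projection onto the closed ball `B_{2ρ}(x₀)`
    (P : X → X)
    (hP_mem : ∀ u, P u ∈ closedBall x₀ (2 * ρ))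
    (hP_proj : ∀ u, ∀ v ∈ closedBall x₀ (2 * ρ), ‖u - P u‖ ≤ ‖u - v‖)
    -- the exact-data Nesterov iteration (with `x₋₁ = x₀` via truncated subtraction)
    (x z : ℕ → X)
    (hx0 : x 0 = x₀)
    (hz : ∀ k : ℕ, z k = x k + (((k : ℝ) - 1) / ((k : ℝ) + α - 1)) • (x k - x (k - 1)))
    (hx : ∀ k : ℕ, x (k + 1) = P (z k + ω • (ContinuousLinearMap.adjoint (F' (z k))) (y - F (z k))))
    -- the auxiliary sequence `w` and the energy `E`
    (w : ℕ → X)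
    (hw : ∀ k : ℕ, w k = x k + (((k : ℝ) - 1) / (α - 1)) • (x k - x (k - 1)))
    (E : ℕ → ℝ)
    (hE : ∀ k : ℕ, E k = (2 * ω / (α - 1)) * ((k : ℝ) + α - 2) ^ 2 * Φ0 (x k)
      + (α - 1) * ‖w k - xstar‖ ^ 2) :
    (∀ k : ℕ, E (k + 1) ≤ E k) ∧
    (∀ k : ℕ, ‖F (x k) - y‖ ^ 2 ≤ (α - 1) * E 0 / (ω * ((k : ℝ) + α - 2) ^ 2)) ∧
    (∀ k : ℕ, ‖w k - xstar‖ ^ 2 ≤ E 0 / (α - 1)) := by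
  have hρ : 0 ≤ ρ := dist_nonneg.trans hxstar
  have hKS : closedBall x₀ (2 * ρ) ⊆ closedBall x₀ (6 * ρ) :=
    closedBall_subset_closedBall (by linarith)
  have hxK : ∀ k, x k ∈ closedBall x₀ (2 * ρ)
    | 0 => hx0 ▸ mem_closedBall_self (by linarith)
    | k + 1 => hx k ▸ hP_mem _
  have hzS : ∀ k, z k ∈ closedBall x₀ (6 * ρ) := fun k => by
    simpa [hz k, show 6 * ρ = 3 * (2 * ρ) by ring] using add_smul_sub_mem_closedBall
      (hxK (k - 1)) (hxK k) (abs_sub_one_div_add_sub_one_le_one k.cast_nonneg (by linarith))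
  have hωL' : ω * L ≤ 1 := ((lt_div_iff₀ (one_div_pos.mp (hω.trans hωL))).mp hωL).le
  have hstep : ∀ k, ∀ v ∈ closedBall x₀ (2 * ρ),
      2 * ω * (Φ0 (x (k + 1)) - Φ0 v) ≤ ‖z k - v‖ ^ 2 - ‖x (k + 1) - v‖ ^ 2 := fun k v hv => by
    have hxk : x (k + 1) = P (z k - ω • ContinuousLinearMap.adjoint (F' (z k)) (F (z k) - y)) := by
      rw [hx k, ← neg_sub (F (z k)), map_neg, smul_neg, ← sub_eq_add_neg]
    exact hconv.two_mul_sub_le_of_projected_gradient_step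
      (fun u hu => funext hΦ0 ▸ (hF u hu).hasGradientAt_half_sq_norm_sub y) hLip
      (convex_closedBall _ _) hKS hω.le hωL' (hzS k) (hxK _) (hxk ▸ hP_proj _) hv
  have hE' : ∀ k, E k = nesterovEnergy Φ0 α ω xstar k (x (k - 1)) (x k) := fun k => by
    rw [hE, hw]; rfl
  have hdec : ∀ k, E (k + 1) ≤ E k := fun k => by
    rw [hE', hE']
    exact nesterovEnergy_succ_le (hconv.subset hKS (convex_closedBall _ _)) hα.le hω.le (hxK k)
      (closedBall_subset_closedBall (by linarith) hxstar) (by simp [hΦ0, hFxstar])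
      (by rw [hΦ0]; positivity) k (fun v hv => hz k ▸ hstep k v hv)
  have hle : ∀ k, E k ≤ E 0 := fun k => antitone_nat_of_succ_le hdec (Nat.zero_le k)
  refine ⟨hdec, fun k => ?_, fun k => ?_⟩
  · rw [show ‖F (x k) - y‖ ^ 2 = 2 * Φ0 (x k) by rw [hΦ0]; ring]
    exact two_mul_le_of_nesterovEnergy_le (by linarith) hω (by linarith [k.cast_nonneg (α := ℝ)])
      (hE' k ▸ hle k)
  · rw [hw]
    exact sq_norm_sub_le_of_nesterovEnergy_le (by linarith) hω.le (by rw [hΦ0]; positivity)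
      (hE' k ▸ hle k)

/-- In the exact-data case the energy sequence `(E⁰(k))` is non-increasing,
and `‖F(x_k⁰) − y‖² ≤ (α−1)E⁰(0)/(ω(k+α−2)²)` and `‖w_k⁰ − x_*‖² ≤ E⁰(0)/(α−1)` for all `k`. -/
theorem nesterov_exact_energy_decay
    {X Y : Type*} [NormedAddCommGroup X] [InnerProductSpace ℝ X] [CompleteSpace X]
    [NormedAddCommGroup Y] [InnerProductSpace ℝ Y] [CompleteSpace Y]
    (x₀ : X) (ρ : ℝ) (hρ : 0 < ρ)
    (F : X → Y) (F' : X → X →L[ℝ] Y)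
    (hF : ∀ u ∈ closedBall x₀ (6 * ρ), HasFDerivAt F (F' u) u)
    (ωb : ℝ) (hωb : ∀ u ∈ closedBall x₀ (6 * ρ), ‖F' u‖ ≤ ωb)
    (y : Y) (xstar : X) (hxstar : xstar ∈ closedBall x₀ ρ) (hFxstar : F xstar = y)
    -- the exact residual functional
    (Φ0 : X → ℝ)
    (hΦ0 : ∀ u, Φ0 u = (1 / 2) * ‖F u - y‖ ^ 2)
    -- convexity and Lipschitz continuity of the gradient on `B_{6ρ}(x₀)`
    (hconv : ConvexOn ℝ (closedBall x₀ (6 * ρ)) Φ0)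
    (L : ℝ) (hL : 0 < L)
    (hLip : ∀ u ∈ closedBall x₀ (6 * ρ), ∀ v ∈ closedBall x₀ (6 * ρ),
      ‖(ContinuousLinearMap.adjoint (F' u)) (F u - y) -
        (ContinuousLinearMap.adjoint (F' v)) (F v - y)‖ ≤ L * ‖u - v‖)
    (α ω : ℝ) (hα : 3 < α) (hω : 0 < ω) (hωL : ω < 1 / L)
    -- `P` is the metric projection onto the closed ball `B_{2ρ}(x₀)`
    (P : X → X)
    (hP_mem : ∀ u, P u ∈ closedBall x₀ (2 * ρ))
    (hP_proj : ∀ u, ∀ v ∈ closedBall x₀ (2 * ρ), ‖u - P u‖ ≤ ‖u - v‖)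
    -- the exact-data Nesterov iteration (with `x₋₁ = x₀` via truncated subtraction)
    (x z : ℕ → X)
    (hx0 : x 0 = x₀)
    (hz : ∀ k : ℕ, z k = x k + (((k : ℝ) - 1) / ((k : ℝ) + α - 1)) • (x k - x (k - 1)))
    (hx : ∀ k : ℕ, x (k + 1) = P (z k + ω • (ContinuousLinearMap.adjoint (F' (z k))) (y - F (z k))))
    -- the auxiliary sequence `w` and the energy `E`
    (w : ℕ → X)
    (hw : ∀ k : ℕ, w k = x k + (((k : ℝ) - 1) / (α - 1)) • (x k - x (k - 1)))
    (E : ℕ → ℝ)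
    (hE : ∀ k : ℕ, E k = (2 * ω / (α - 1)) * ((k : ℝ) + α - 2) ^ 2 * Φ0 (x k)
      + (α - 1) * ‖w k - xstar‖ ^ 2) :
    (∀ k : ℕ, E (k + 1) ≤ E k) ∧
    (∀ k : ℕ, ‖F (x k) - y‖ ^ 2 ≤ (α - 1) * E 0 / (ω * ((k : ℝ) + α - 2) ^ 2)) ∧
    (∀ k : ℕ, ‖w k - xstar‖ ^ 2 ≤ E 0 / (α - 1)) :=
  nesterov_exact_energy_decay_general x₀ ρ F F' hF y xstar hxstar hFxstar Φ0 hΦ0 hconv L hLip α ω hα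
    hω hωL P hP_mem hP_proj x z hx0 hz hx w hw E hE
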